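/- arXiv:1308.0485 — 3 statements merged into one kernel-verified Lean document; each statement's English description precedes it below -/
import Mathlib

section
/- Let B be a selfadjoint operator on a complex Hilbert space X with σ(B) ⊆ [δ,∞) for some δ > 0, Λ = B^{1/2}, and let J be a skew-adjoint bounded operator with J² = −1. Then the operator H = Λ(iJ)Λ, defined on D(H) = {X ∈ D(Λ) : JΛX ∈ D(Λ)}, is densely defined and selfadjoint on X. -/
open LinearPMap

noncomputable section Aux

variable {X : Type*} [NormedAddCommGroup X] [InnerProductSpace ℂ X]

local notation "⟪" x ", " y "⟫" => @inner ℂ _ _ x y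

private theorem lamcongr (Λ : X →ₗ.[ℂ] X) {u v : Λ.domain} (h : (u : X) = (v : X)) :
    Λ u = Λ v := congrArg (fun t => Λ t) (Subtype.ext h)

/-- The domain of `H = Λ (iJ) Λ`. -/
def Hdom (Λ : X →ₗ.[ℂ] X) (J : X →L[ℂ] X) : Submodule ℂ X where
  carrier := {x | ∃ hx : x ∈ Λ.domain, J (Λ ⟨x, hx⟩) ∈ Λ.domain}
  zero_mem' := ⟨Λ.domain.zero_mem, by
    have e : Λ ⟨0, Λ.domain.zero_mem⟩ = 0 := Λ.map_zero
    rw [e, J.map_zero]; exact Λ.domain.zero_mem⟩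
  add_mem' := by
    rintro a b ⟨ha1, ha2⟩ ⟨hb1, hb2⟩
    refine ⟨Λ.domain.add_mem ha1 hb1, ?_⟩
    have e : Λ ⟨a + b, Λ.domain.add_mem ha1 hb1⟩ = Λ ⟨a, ha1⟩ + Λ ⟨b, hb1⟩ := by
      rw [← Λ.map_add]; exact lamcongr Λ rfl
    rw [e, J.map_add]; exact Λ.domain.add_mem ha2 hb2
  smul_mem' := by
    rintro c a ⟨ha1, ha2⟩
    refine ⟨Λ.domain.smul_mem c ha1, ?_⟩
    have e : Λ ⟨c • a, Λ.domain.smul_mem c ha1⟩ = c • Λ ⟨a, ha1⟩ := by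
      rw [← Λ.map_smul]; exact lamcongr Λ rfl
    rw [e, J.map_smul]; exact Λ.domain.smul_mem c ha2

theorem mem_Hdom {Λ : X →ₗ.[ℂ] X} {J : X →L[ℂ] X} (x : X) :
    x ∈ Hdom Λ J ↔ ∃ hx : x ∈ Λ.domain, J (Λ ⟨x, hx⟩) ∈ Λ.domain := Iff.rfl

/-- underlying function of `H`. -/
def HmapFun (Λ : X →ₗ.[ℂ] X) (J : X →L[ℂ] X) (x : Hdom Λ J) : X :=
  Complex.I • Λ ⟨J (Λ ⟨(x : X), x.2.choose⟩), x.2.choose_spec⟩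

theorem HmapFun_spec (Λ : X →ₗ.[ℂ] X) (J : X →L[ℂ] X) (x : Hdom Λ J)
    (hx : (x : X) ∈ Λ.domain) (hJx : J (Λ ⟨(x : X), hx⟩) ∈ Λ.domain) :
    HmapFun Λ J x = Complex.I • Λ ⟨J (Λ ⟨(x : X), hx⟩), hJx⟩ := rfl

theorem HmapFun_add (Λ : X →ₗ.[ℂ] X) (J : X →L[ℂ] X) (a b : Hdom Λ J) :
    HmapFun Λ J (a + b) = HmapFun Λ J a + HmapFun Λ J b := by
  obtain ⟨ha1, ha2⟩ := a.2
  obtain ⟨hb1, hb2⟩ := b.2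
  have hab1 : ((a + b : Hdom Λ J) : X) ∈ Λ.domain := Λ.domain.add_mem ha1 hb1
  have e1 : Λ ⟨((a + b : Hdom Λ J) : X), hab1⟩ = Λ ⟨(a : X), ha1⟩ + Λ ⟨(b : X), hb1⟩ := by
    rw [← Λ.map_add]; exact lamcongr Λ rfl
  have hab2 : J (Λ ⟨((a + b : Hdom Λ J) : X), hab1⟩) ∈ Λ.domain := by
    rw [e1, J.map_add]; exact Λ.domain.add_mem ha2 hb2
  have hv : J (Λ ⟨((a + b : Hdom Λ J) : X), hab1⟩) =
      J (Λ ⟨(a : X), ha1⟩) + J (Λ ⟨(b : X), hb1⟩) := by rw [e1, J.map_add]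
  have e2 : Λ ⟨J (Λ ⟨((a + b : Hdom Λ J) : X), hab1⟩), hab2⟩ =
      Λ ⟨J (Λ ⟨(a : X), ha1⟩), ha2⟩ + Λ ⟨J (Λ ⟨(b : X), hb1⟩), hb2⟩ := by
    rw [← Λ.map_add]; exact lamcongr Λ hv
  rw [HmapFun_spec Λ J (a + b) hab1 hab2, HmapFun_spec Λ J a ha1 ha2,
    HmapFun_spec Λ J b hb1 hb2, e2, smul_add]

theorem HmapFun_smul (Λ : X →ₗ.[ℂ] X) (J : X →L[ℂ] X) (c : ℂ) (a : Hdom Λ J) :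
    HmapFun Λ J (c • a) = c • HmapFun Λ J a := by
  obtain ⟨ha1, ha2⟩ := a.2
  have hca1 : ((c • a : Hdom Λ J) : X) ∈ Λ.domain := Λ.domain.smul_mem c ha1
  have e1 : Λ ⟨((c • a : Hdom Λ J) : X), hca1⟩ = c • Λ ⟨(a : X), ha1⟩ := by
    rw [← Λ.map_smul]; exact lamcongr Λ rfl
  have hca2 : J (Λ ⟨((c • a : Hdom Λ J) : X), hca1⟩) ∈ Λ.domain := by
    rw [e1, J.map_smul]; exact Λ.domain.smul_mem c ha2
  have hv : J (Λ ⟨((c • a : Hdom Λ J) : X), hca1⟩) = c • J (Λ ⟨(a : X), ha1⟩) := by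
    rw [e1, J.map_smul]
  have e2 : Λ ⟨J (Λ ⟨((c • a : Hdom Λ J) : X), hca1⟩), hca2⟩ =
      c • Λ ⟨J (Λ ⟨(a : X), ha1⟩), ha2⟩ := by
    rw [← Λ.map_smul]; exact lamcongr Λ hv
  rw [HmapFun_spec Λ J (c • a) hca1 hca2, HmapFun_spec Λ J a ha1 ha2, e2, smul_comm]

/-- The operator `H = Λ (iJ) Λ` with domain `{x ∈ D(Λ) : JΛx ∈ D(Λ)}`. -/
def Hop (Λ : X →ₗ.[ℂ] X) (J : X →L[ℂ] X) : X →ₗ.[ℂ] X :=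
  ⟨Hdom Λ J,
    { toFun := HmapFun Λ J
      map_add' := HmapFun_add Λ J
      map_smul' := HmapFun_smul Λ J }⟩

theorem Hop_apply (Λ : X →ₗ.[ℂ] X) (J : X →L[ℂ] X) (x : (Hop Λ J).domain)
    (hx : (x : X) ∈ Λ.domain) (hJx : J (Λ ⟨(x : X), hx⟩) ∈ Λ.domain) :
    Hop Λ J x = Complex.I • Λ ⟨J (Λ ⟨(x : X), hx⟩), hJx⟩ := rfl

end Aux

local notation "⟪" x ", " y "⟫" => @inner ℂ _ _ x y

/-- Let `B` be selfadjoint with `σ(B) ⊆ [δ,∞)`, `δ > 0` (coercivity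
encoding), `Λ = B^{1/2}`, and `J` bounded skew-adjoint with `J² = -1`.  Then the
operator `H = Λ(iJ)Λ`, defined on `D(H) = {x ∈ D(Λ) : JΛx ∈ D(Λ)}`, is densely
defined and selfadjoint on `X`. -/
theorem stmt2
    {X : Type*} [NormedAddCommGroup X] [InnerProductSpace ℂ X] [CompleteSpace X]
    (δ : ℝ) (hδ : 0 < δ)
    (B Λ : X →ₗ.[ℂ] X) (J : X →L[ℂ] X)
    (hB : IsSelfAdjoint B)
    (hBspec : ∀ x : B.domain, δ * ‖(x : X)‖ ^ 2 ≤ (inner ℂ (B x) (x : X) : ℂ).re)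
    (hJ : ContinuousLinearMap.adjoint J = -J)
    (hJ2 : J ∘L J = -1)
    (hΛ : IsSelfAdjoint Λ)
    (hΛpos : ∀ x : Λ.domain, 0 ≤ (inner ℂ (Λ x) (x : X) : ℂ).re)
    (hdom : ∀ x : X, x ∈ B.domain ↔ ∃ hx : x ∈ Λ.domain, Λ ⟨x, hx⟩ ∈ Λ.domain)
    (hsq : ∀ (x : Λ.domain) (h2 : Λ x ∈ Λ.domain) (hxB : (x : X) ∈ B.domain),
      Λ ⟨Λ x, h2⟩ = B ⟨(x : X), hxB⟩) :
    ∃ H : X →ₗ.[ℂ] X,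
      -- `D(H) = {x ∈ D(Λ) : JΛx ∈ D(Λ)}`:
      (∀ x : X, x ∈ H.domain ↔ ∃ hx : x ∈ Λ.domain, J (Λ ⟨x, hx⟩) ∈ Λ.domain) ∧
      -- `H = Λ (iJ) Λ` on this domain:
      (∀ (x : H.domain) (hx : (x : X) ∈ Λ.domain)
        (hJx : J (Λ ⟨(x : X), hx⟩) ∈ Λ.domain),
        H x = Complex.I • Λ ⟨J (Λ ⟨(x : X), hx⟩), hJx⟩) ∧
      -- `H` is densely defined and selfadjoint:
      Dense (H.domain : Set X) ∧ IsSelfAdjoint H := by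
  have hΛ' : Λ† = Λ := LinearPMap.isSelfAdjoint_def.mp hΛ
  have hB' : B† = B := LinearPMap.isSelfAdjoint_def.mp hB
  have hΛd : Dense (Λ.domain : Set X) := hΛ.dense_domain
  have hBd : Dense (B.domain : Set X) := hB.dense_domain
  -- symmetry of Λ and B
  have hΛsym : ∀ (u v : Λ.domain), ⟪Λ u, (v : X)⟫ = ⟪(u : X), Λ v⟫ := by
    have h := LinearPMap.adjoint_isFormalAdjoint hΛd
    rw [hΛ'] at h
    exact h
  have hBsym : ∀ (u v : B.domain), ⟪B u, (v : X)⟫ = ⟪(u : X), B v⟫ := by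
    have h := LinearPMap.adjoint_isFormalAdjoint hBd
    rw [hB'] at h
    exact h
  have hΛsym' : ∀ (a : Λ.domain) (b : X) (hb : b ∈ Λ.domain),
      ⟪Λ a, b⟫ = ⟪(a : X), Λ ⟨b, hb⟩⟫ := fun a b hb => hΛsym a ⟨b, hb⟩
  -- key: selfadjointness transfer
  have hBkey : ∀ (y w : X), (∀ u : B.domain, ⟪w, (u : X)⟫ = ⟪y, B u⟫) →
      ∃ hy : y ∈ B.domain, B ⟨y, hy⟩ = w := by
    intro y w hyw
    have h1 : y ∈ B†.domain := LinearPMap.mem_adjoint_domain_of_exists _ ⟨w, hyw⟩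
    have h2 : B† ⟨y, h1⟩ = w := LinearPMap.adjoint_apply_eq hBd _ hyw
    have h3 : (y, w) ∈ B†.graph := by
      rw [← h2]; exact LinearPMap.mem_graph _ ⟨y, h1⟩
    rw [hB'] at h3
    rcases B.mem_graph_iff.mp h3 with ⟨u, hu1, hu2⟩
    have hu1' : (u : X) = y := hu1
    have hu2' : B u = w := hu2
    refine ⟨hu1' ▸ u.2, ?_⟩
    rw [← hu2']
    exact congrArg (fun t => B t) (Subtype.ext hu1'.symm)
  -- J facts
  have hJadj : ∀ a b : X, ⟪J a, b⟫ = -⟪a, J b⟫ := by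
    intro a b
    have h := ContinuousLinearMap.adjoint_inner_right J a b
    rw [hJ] at h
    rw [← h, ContinuousLinearMap.neg_apply, inner_neg_right]
  have hJ2' : ∀ a : X, J (J a) = -a := by
    intro a
    have h := ContinuousLinearMap.ext_iff.mp hJ2 a
    simpa using h
  -- B bounded below and injective
  have hBlb : ∀ u : B.domain, δ * ‖(u : X)‖ ≤ ‖B u‖ := by
    intro u
    rcases eq_or_ne ((u : X)) 0 with h | h
    · rw [h]; simpa using norm_nonneg (B u)
    · have h1 := hBspec u
      have h2a : (⟪B u, (u : X)⟫).re ≤ ‖(⟪B u, (u : X)⟫ : ℂ)‖ := Complex.re_le_norm _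
      have h2b : ‖(⟪B u, (u : X)⟫ : ℂ)‖ ≤ ‖B u‖ * ‖(u : X)‖ := norm_inner_le_norm _ _
      have h2 : (⟪B u, (u : X)⟫).re ≤ ‖B u‖ * ‖(u : X)‖ := h2a.trans h2b
      have hpos : (0 : ℝ) < ‖(u : X)‖ := norm_pos_iff.mpr h
      nlinarith
  have hBinj : ∀ u : B.domain, B u = 0 → (u : X) = 0 := by
    intro u h
    have h1 := hBspec u
    rw [h] at h1
    simp only [inner_zero_left, Complex.zero_re] at h1
    have hs : ‖(u : X)‖ ^ 2 ≤ 0 := by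
      have h2 : δ * ‖(u : X)‖ ^ 2 ≤ δ * 0 := by simpa using h1
      simpa using (mul_le_mul_iff_of_pos_left hδ).mp h2
    have h3 : ‖(u : X)‖ ^ 2 = 0 := le_antisymm hs (sq_nonneg _)
    exact norm_eq_zero.mp (pow_eq_zero_iff (by norm_num) |>.mp h3)
  -- B is surjective
  have hBsurj : ∀ z : X, ∃ u : B.domain, B u = z := by
    intro z
    set K : Submodule ℂ X := LinearMap.range B.toFun with hKdef
    have hKd : Dense (K : Set X) := by
      rw [Submodule.dense_iff_topologicalClosure_eq_top,
        Submodule.topologicalClosure_eq_top_iff]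
      rw [Submodule.eq_bot_iff]
      intro y hy
      have h0 : ∀ u : B.domain, ⟪(0 : X), (u : X)⟫ = ⟪y, B u⟫ := by
        intro u
        rw [inner_zero_left]
        have hyu : ⟪B u, y⟫ = 0 :=
          (Submodule.mem_orthogonal K y).mp hy (B u) (LinearMap.mem_range_self _ u)
        rw [← inner_conj_symm, hyu, _root_.map_zero]
      obtain ⟨hy1, hy2⟩ := hBkey y 0 h0
      exact hBinj ⟨y, hy1⟩ hy2
    have hz : z ∈ closure (K : Set X) := hKd z
    rcases mem_closure_iff_seq_limit.mp hz with ⟨a, ha, hlim⟩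
    choose u hu using fun n => LinearMap.mem_range.mp (ha n)
    have hcauchy : CauchySeq (fun n => ((u n : X))) := by
      rw [Metric.cauchySeq_iff]
      intro ε hε
      rcases Metric.cauchySeq_iff.mp hlim.cauchySeq (δ * ε) (by positivity) with ⟨N, hN⟩
      refine ⟨N, fun m hm n hn => ?_⟩
      have hd : δ * dist ((u m : X)) ((u n : X)) ≤ dist (a m) (a n) := by
        rw [dist_eq_norm, dist_eq_norm, ← hu m, ← hu n]
        calc δ * ‖(u m : X) - (u n : X)‖
            = δ * ‖((u m - u n : B.domain) : X)‖ := by norm_num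
          _ ≤ ‖B (u m - u n)‖ := hBlb _
          _ = ‖B.toFun (u m) - B.toFun (u n)‖ := by
              rw [show B (u m - u n) = B.toFun (u m - u n) from rfl, LinearMap.map_sub]
      have hlt := hN m hm n hn
      have := lt_of_le_of_lt hd hlt
      exact lt_of_mul_lt_mul_left (by linarith) hδ.le
    rcases cauchySeq_tendsto_of_complete hcauchy with ⟨x, hx⟩
    have hwz : ∀ v : B.domain, ⟪z, (v : X)⟫ = ⟪x, B v⟫ := by
      intro v
      have l1 : Filter.Tendsto (fun n => ⟪a n, (v : X)⟫) Filter.atTop (nhds ⟪z, (v : X)⟫) :=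
        hlim.inner tendsto_const_nhds
      have l2 : Filter.Tendsto (fun n => ⟪(u n : X), B v⟫) Filter.atTop (nhds ⟪x, B v⟫) :=
        hx.inner tendsto_const_nhds
      have he : (fun n => ⟪a n, (v : X)⟫) = fun n => ⟪(u n : X), B v⟫ := by
        funext n
        rw [← hu n]
        exact hBsym (u n) v
      rw [he] at l1
      exact (tendsto_nhds_unique l1 l2)
    obtain ⟨hx1, hx2⟩ := hBkey x z hwz
    exact ⟨⟨x, hx1⟩, hx2⟩
  -- Λ is surjective
  have hΛsurj : ∀ z : X, ∃ v : Λ.domain, Λ v = z := by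
    intro z
    obtain ⟨u, hu⟩ := hBsurj z
    obtain ⟨h1, h2⟩ := (hdom u).mp u.2
    refine ⟨⟨Λ ⟨(u : X), h1⟩, h2⟩, ?_⟩
    rw [hsq ⟨(u : X), h1⟩ h2 u.2]
    exact hu
  -- properties of H
  have happly := Hop_apply Λ J
  -- symmetry of H
  have hHsym : (Hop Λ J).IsFormalAdjoint (Hop Λ J) := by
    intro x y
    obtain ⟨hx1, hx2⟩ := x.2
    obtain ⟨hy1, hy2⟩ := y.2
    rw [happly x hx1 hx2, happly y hy1 hy2]
    rw [inner_smul_left, inner_smul_right, Complex.conj_I,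
      hΛsym' ⟨J (Λ ⟨(x : X), hx1⟩), hx2⟩ _ hy1, hJadj,
      hΛsym' ⟨(x : X), hx1⟩ _ hy2]
    ring
  -- surjectivity of H
  have hHsurj : ∀ z : X, ∃ x : (Hop Λ J).domain, Hop Λ J x = z := by
    intro z
    obtain ⟨v, hv⟩ := hΛsurj ((-Complex.I) • z)
    obtain ⟨x, hx⟩ := hΛsurj (-(J (v : X)))
    have e : J (Λ ⟨(x : X), x.2⟩) = (v : X) := by
      rw [show (⟨(x : X), x.2⟩ : Λ.domain) = x from rfl, hx, J.map_neg, hJ2', neg_neg]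
    have hJx : J (Λ ⟨(x : X), x.2⟩) ∈ Λ.domain := e ▸ v.2
    refine ⟨⟨(x : X), ⟨x.2, hJx⟩⟩, ?_⟩
    rw [happly ⟨(x : X), ⟨x.2, hJx⟩⟩ x.2 hJx]
    have e2 : Λ ⟨J (Λ ⟨(x : X), x.2⟩), hJx⟩ = (-Complex.I) • z := by
      rw [show (⟨J (Λ ⟨(x : X), x.2⟩), hJx⟩ : Λ.domain) = v from Subtype.ext e, hv]
    rw [e2, smul_smul]
    simp [Complex.I_mul_I]
  -- density of the domain of H
  have hHdense : Dense ((Hop Λ J).domain : Set X) := by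
    rw [Submodule.dense_iff_topologicalClosure_eq_top,
      Submodule.topologicalClosure_eq_top_iff, Submodule.eq_bot_iff]
    intro y hy
    obtain ⟨w, hw⟩ := hΛsurj y
    have hJw : J (w : X) = 0 := by
      refine hΛd.eq_zero_of_inner_left ℂ (fun v0 hv0 => ?_)
      let v : Λ.domain := ⟨v0, hv0⟩
      obtain ⟨x, hx⟩ := hΛsurj (J (v : X))
      have e : J (Λ ⟨(x : X), x.2⟩) = -(v : X) := by
        rw [show (⟨(x : X), x.2⟩ : Λ.domain) = x from rfl, hx, hJ2']
      have hJx : J (Λ ⟨(x : X), x.2⟩) ∈ Λ.domain := by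
        rw [e]; exact Λ.domain.neg_mem v.2
      have hxH : (x : X) ∈ (Hop Λ J).domain := ⟨x.2, hJx⟩
      have h0 : ⟪(x : X), y⟫ = 0 :=
        (Submodule.mem_orthogonal _ y).mp hy (x : X) hxH
      have h1 : ⟪(x : X), y⟫ = ⟪J (v : X), (w : X)⟫ := by
        calc ⟪(x : X), y⟫ = ⟪(x : X), Λ w⟫ := by rw [hw]
          _ = ⟪Λ x, (w : X)⟫ := (hΛsym x w).symm
          _ = ⟪J (v : X), (w : X)⟫ := by rw [hx]
      have h2 : ⟪J (v : X), (w : X)⟫ = 0 := h1.symm.trans h0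
      calc ⟪J (w : X), (v : X)⟫ = -⟪(w : X), J (v : X)⟫ := hJadj _ _
        _ = -(starRingEnd ℂ) ⟪J (v : X), (w : X)⟫ := by rw [inner_conj_symm]
        _ = 0 := by rw [h2, _root_.map_zero, neg_zero]
    have hw0 : (w : X) = 0 := by
      have h3 := hJ2' (w : X)
      rw [hJw, J.map_zero] at h3
      exact neg_eq_zero.mp h3.symm
    rw [← hw, show w = 0 from Subtype.ext hw0, Λ.map_zero]
  -- selfadjointness of H
  have hsa : IsSelfAdjoint (Hop Λ J) := by
    rw [LinearPMap.isSelfAdjoint_def]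
    have hle : Hop Λ J ≤ (Hop Λ J)† :=
      LinearPMap.IsFormalAdjoint.le_adjoint hHdense hHsym
    have hdomle : ((Hop Λ J)†).domain ≤ (Hop Λ J).domain := by
      intro y hy
      obtain ⟨x, hxz⟩ := hHsurj ((Hop Λ J)† ⟨y, hy⟩)
      have hxy : y = (x : X) := by
        apply ext_inner_right ℂ
        intro v
        obtain ⟨u, hu⟩ := hHsurj v
        rw [← hu]
        have h1 : ⟪(Hop Λ J)† ⟨y, hy⟩, (u : X)⟫ = ⟪y, Hop Λ J u⟫ :=
          LinearPMap.adjoint_isFormalAdjoint hHdense ⟨y, hy⟩ u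
        have h2 : ⟪(Hop Λ J)† ⟨y, hy⟩, (u : X)⟫ = ⟪(x : X), Hop Λ J u⟫ := by
          rw [← hxz]; exact hHsym x u
        rw [← h1, h2]
      rw [hxy]; exact x.2
    have hdomeq : (Hop Λ J).domain = ((Hop Λ J)†).domain :=
      le_antisymm hle.1 hdomle
    exact (LinearPMap.eq_of_le_of_domain_eq hle hdomeq).symm
  exact ⟨Hop Λ J, fun x => Iff.rfl, fun x hx hJx => happly x hx hJx, hHdense, hsa⟩
end

section
/- Under the hypotheses above, the identity A = −i Λ^{-1} H Λ holds on the domain Λ^{-1} D(H), where A = JB, Λ = B^{1/2}, and H = Λ(iJ)Λ; moreover Λ^{-1}D(H) is dense in V = D(Λ) with the norm ‖X‖_V = ‖ΛX‖_X. -/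
/-- Under the standing hypotheses (`B` selfadjoint with `σ(B) ⊆ [δ,∞)`,
`δ>0`, `J` bounded skew-adjoint with `J² = -1`, `Λ = B^{1/2}` with bounded inverse
`Λinv`, `A = JB`, `H = Λ(iJ)Λ` on `D(H) = {x ∈ D(Λ) : JΛx ∈ D(Λ)}`), the identity
`A = -i Λ⁻¹ H Λ` holds on `Λ⁻¹D(H)`, and `Λ⁻¹D(H)` is dense in `V = D(Λ)`
for the norm `‖x‖_V = ‖Λx‖`. -/
theorem stmt4
    {X : Type*} [NormedAddCommGroup X] [InnerProductSpace ℂ X] [CompleteSpace X]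
    (δ : ℝ) (hδ : 0 < δ)
    (B Λ : X →ₗ.[ℂ] X) (J Λinv : X →L[ℂ] X)
    (hB : IsSelfAdjoint B)
    (hBspec : ∀ x : B.domain, δ * ‖(x : X)‖ ^ 2 ≤ (inner ℂ (B x) (x : X) : ℂ).re)
    (hJ : ContinuousLinearMap.adjoint J = -J)
    (hJ2 : J ∘L J = -1)
    (hΛ : IsSelfAdjoint Λ)
    (hΛpos : ∀ x : Λ.domain, 0 ≤ (inner ℂ (Λ x) (x : X) : ℂ).re)
    (hdom : ∀ x : X, x ∈ B.domain ↔ ∃ hx : x ∈ Λ.domain, Λ ⟨x, hx⟩ ∈ Λ.domain)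
    (hsq : ∀ (x : Λ.domain) (h2 : Λ x ∈ Λ.domain) (hxB : (x : X) ∈ B.domain),
      Λ ⟨Λ x, h2⟩ = B ⟨(x : X), hxB⟩)
    (hΛinv1 : ∀ y : X, ∃ h : Λinv y ∈ Λ.domain, Λ ⟨Λinv y, h⟩ = y)
    (hΛinv2 : ∀ x : Λ.domain, Λinv (Λ x) = x) :
    -- On `Λ⁻¹D(H)`, i.e. for `x ∈ D(Λ)` with `Λx ∈ D(H)` (that is `Λx ∈ D(Λ)` and
    -- `JΛΛx ∈ D(Λ)`), one has `x ∈ D(A) = D(B)` and `A x = -i Λ⁻¹ (H (Λ x))`: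
    (∀ (x : X) (hx : x ∈ Λ.domain) (h2 : Λ ⟨x, hx⟩ ∈ Λ.domain)
      (h3 : J (Λ ⟨Λ ⟨x, hx⟩, h2⟩) ∈ Λ.domain),
      ∃ hxB : x ∈ B.domain,
        J (B ⟨x, hxB⟩)
          = (-Complex.I) • Λinv (Complex.I • Λ ⟨J (Λ ⟨Λ ⟨x, hx⟩, h2⟩), h3⟩)) ∧
    -- `Λ⁻¹ D(H)` is dense in `V = D(Λ)` for the norm `‖x‖_V = ‖Λx‖`:
    (∀ (x₀ : Λ.domain) (ε : ℝ), 0 < ε →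
      ∃ (x : X) (hx : x ∈ Λ.domain) (h2 : Λ ⟨x, hx⟩ ∈ Λ.domain),
        J (Λ ⟨Λ ⟨x, hx⟩, h2⟩) ∈ Λ.domain ∧ ‖Λ ⟨x, hx⟩ - Λ x₀‖ < ε) := by
  constructor
  · -- Part 1: the identity
    intro x hx h2 h3
    refine ⟨(hdom x).2 ⟨hx, h2⟩, ?_⟩
    have hBx : B ⟨x, (hdom x).2 ⟨hx, h2⟩⟩ = Λ ⟨Λ ⟨x, hx⟩, h2⟩ :=
      (hsq ⟨x, hx⟩ h2 _).symm
    rw [hBx, map_smul, hΛinv2 ⟨J (Λ ⟨Λ ⟨x, hx⟩, h2⟩), h3⟩, smul_smul]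
    norm_num
  · -- Part 2: density
    intro x₀ ε hε
    have hdense : Dense (Λ.domain : Set X) := hΛ.dense_domain
    set y : X := Λ x₀
    set C : ℝ := ‖Λinv‖ + 1 with hC
    set C' : ℝ := ‖J‖ + 1 with hC'
    have hC0 : 0 < C := by positivity
    have hC'0 : 0 < C' := by positivity
    -- choose u ∈ D(Λ) close to y
    obtain ⟨u, hu, huy⟩ : ∃ u ∈ Λ.domain, ‖u - y‖ < ε / 2 := by
      have := Metric.denseRange_iff.mp hdense.denseRange_val y (ε / 2) (by positivity)
      obtain ⟨⟨u, hu⟩, h⟩ := this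
      exact ⟨u, hu, by rwa [dist_comm, dist_eq_norm] at h⟩
    set v₀ : X := Λ ⟨u, hu⟩
    have huv : Λinv v₀ = u := hΛinv2 ⟨u, hu⟩
    -- choose w ∈ D(Λ) close to J v₀
    obtain ⟨w, hw, hwv⟩ : ∃ w ∈ Λ.domain, ‖w - J v₀‖ < ε / (2 * C * C') := by
      have := Metric.denseRange_iff.mp hdense.denseRange_val (J v₀)
        (ε / (2 * C * C')) (by positivity)
      obtain ⟨⟨w, hw⟩, h⟩ := this
      exact ⟨w, hw, by rwa [dist_comm, dist_eq_norm] at h⟩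
    -- the approximant
    set ζ : X := Λinv (-(J w))
    obtain ⟨hζ, hζeq⟩ := hΛinv1 (-(J w))
    set x : X := Λinv ζ
    obtain ⟨hxd, hxeq⟩ := hΛinv1 ζ
    have h2 : Λ ⟨x, hxd⟩ ∈ Λ.domain := hxeq ▸ hζ
    have hΛx : Λ ⟨x, hxd⟩ = ζ := hxeq
    have hΛζ : Λ ⟨Λ ⟨x, hxd⟩, h2⟩ = -(J w) := by
      have : (⟨Λ ⟨x, hxd⟩, h2⟩ : Λ.domain) = ⟨ζ, hζ⟩ := Subtype.ext hΛx
      rw [this, hζeq]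
    have h3 : J (Λ ⟨Λ ⟨x, hxd⟩, h2⟩) ∈ Λ.domain := by
      rw [hΛζ, map_neg]
      have : J (J w) = -w := by
        have := congrFun (congrArg DFunLike.coe hJ2) w
        simpa using this
      rw [this, neg_neg]
      exact hw
    refine ⟨x, hxd, h2, h3, ?_⟩
    -- norm estimate
    have key : ζ - u = Λinv (-(J w) - v₀) := by
      rw [map_sub, huv]
    have hJv : -(J w) - v₀ = -(J (w - J v₀)) := by
      have hJJ : J (J v₀) = -v₀ := by
        have := congrFun (congrArg DFunLike.coe hJ2) v₀
        simpa using this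
      rw [map_sub, hJJ]
      abel
    have hζu : ‖ζ - u‖ < ε / 2 := by
      rw [key, hJv, map_neg, norm_neg]
      have hΛC : ‖Λinv‖ ≤ C := by simp [hC]
      have hJC : ‖J‖ ≤ C' := by simp [hC']
      calc ‖Λinv (J (w - J v₀))‖ ≤ ‖Λinv‖ * ‖J (w - J v₀)‖ := Λinv.le_opNorm _
        _ ≤ ‖Λinv‖ * (‖J‖ * ‖w - J v₀‖) := by gcongr; exact J.le_opNorm _
        _ ≤ C * (C' * ‖w - J v₀‖) := by gcongr
        _ = C * C' * ‖w - J v₀‖ := by ring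
        _ < C * C' * (ε / (2 * C * C')) :=
            mul_lt_mul_of_pos_left hwv (by positivity)
        _ = ε / 2 := by field_simp
    calc ‖Λ ⟨x, hxd⟩ - Λ x₀‖ = ‖(ζ - u) + (u - y)‖ := by rw [hΛx]; congr 1; abel
      _ ≤ ‖ζ - u‖ + ‖u - y‖ := norm_add_le _ _
      _ < ε / 2 + ε / 2 := by gcongr
      _ = ε := by ring
end

section
/- Under the hypotheses above, for every X₀ ∈ V the mild-solution identity A^{-1}[X(t) − X₀] = ∫₀ᵗ X(s) ds holds in V for the function X(t) = Λ^{-1} e^{-iHt} Λ X₀, so X is a mild solution of dX/dt = AX; moreover this mild solution is unique in C(ℝ, V). -/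
open intervalIntegral

local notation "⟪" x ", " y "⟫" => @inner ℂ _ _ x y

section Aux

variable {X : Type*} [NormedAddCommGroup X] [InnerProductSpace ℂ X]

theorem pmapCongr (T : X →ₗ.[ℂ] X) {a b : X} (h : a = b) (ha : a ∈ T.domain)
    (hb : b ∈ T.domain) : T ⟨a, ha⟩ = T ⟨b, hb⟩ := by cases h; rfl

theorem pmapEqCongr {S T : X →ₗ.[ℂ] X} (h : S = T) {x : X} (hx : x ∈ S.domain)
    (hx' : x ∈ T.domain) : S ⟨x, hx⟩ = T ⟨x, hx'⟩ := by cases h; rfl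

end Aux

/-- With `A = JB`, `A⁻¹ = -B⁻¹J : X → V` bounded, `Λ = B^{1/2}`,
`H = Λ(iJ)Λ` selfadjoint and `U t = e^{-iHt}` its unitary group, for every
`x₀ ∈ V = D(Λ)` the function `X(t) = Λ⁻¹ U t (Λ x₀)` satisfies the mild-solution
identity `A⁻¹[X(t) − X(0)] = ∫₀ᵗ X(s) ds`, so that `X` is a mild solution of
`Ẋ = AX`; moreover this mild solution is unique in `C(ℝ, V)`. -/
theorem stmt6
    {X : Type*} [NormedAddCommGroup X] [InnerProductSpace ℂ X] [CompleteSpace X]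
    (δ : ℝ) (hδ : 0 < δ)
    (B Λ H : X →ₗ.[ℂ] X) (J Λinv Ainv : X →L[ℂ] X)
    (hB : IsSelfAdjoint B)
    (hBspec : ∀ x : B.domain, δ * ‖(x : X)‖ ^ 2 ≤ (inner ℂ (B x) (x : X) : ℂ).re)
    (hJ : ContinuousLinearMap.adjoint J = -J)
    (hJ2 : J ∘L J = -1)
    (hΛ : IsSelfAdjoint Λ)
    (hΛpos : ∀ x : Λ.domain, 0 ≤ (inner ℂ (Λ x) (x : X) : ℂ).re)
    (hdom : ∀ x : X, x ∈ B.domain ↔ ∃ hx : x ∈ Λ.domain, Λ ⟨x, hx⟩ ∈ Λ.domain)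
    (hsq : ∀ (x : Λ.domain) (h2 : Λ x ∈ Λ.domain) (hxB : (x : X) ∈ B.domain),
      Λ ⟨Λ x, h2⟩ = B ⟨(x : X), hxB⟩)
    (hΛinv1 : ∀ y : X, ∃ h : Λinv y ∈ Λ.domain, Λ ⟨Λinv y, h⟩ = y)
    (hΛinv2 : ∀ x : Λ.domain, Λinv (Λ x) = x)
    -- `Ainv = A⁻¹ = -B⁻¹J` is the bounded inverse of `A = JB`:
    (hAinv1 : ∀ y : X, ∃ hy : Ainv y ∈ B.domain, J (B ⟨Ainv y, hy⟩) = y)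
    (hAinv2 : ∀ x : B.domain, Ainv (J (B x)) = x)
    -- `H = Λ(iJ)Λ`, selfadjoint:
    (hHdom : ∀ x : X, x ∈ H.domain ↔ ∃ hx : x ∈ Λ.domain, J (Λ ⟨x, hx⟩) ∈ Λ.domain)
    (hHval : ∀ (x : H.domain) (hx : (x : X) ∈ Λ.domain)
      (hJx : J (Λ ⟨(x : X), hx⟩) ∈ Λ.domain),
      H x = Complex.I • Λ ⟨J (Λ ⟨(x : X), hx⟩), hJx⟩)
    (hH : IsSelfAdjoint H)
    -- `U t = e^{-iHt}`, the strongly continuous unitary group generated by `-iH`: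
    (U : ℝ → X →L[ℂ] X)
    (hU0 : U 0 = ContinuousLinearMap.id ℂ X)
    (hUgrp : ∀ s t : ℝ, U (s + t) = (U s) ∘L (U t))
    (hUuni : ∀ (t : ℝ) (y : X), ‖U t y‖ = ‖y‖)
    (hUcont : ∀ y : X, Continuous fun t : ℝ => U t y)
    (hUgen : ∀ (x : H.domain) (t : ℝ), ∃ h : U t (x : X) ∈ H.domain,
      HasDerivAt (fun s : ℝ => U s (x : X)) ((-Complex.I) • H ⟨U t (x : X), h⟩) t)
    (x₀ : Λ.domain) :
    -- the mild-solution identity for `X(t) = Λ⁻¹ U t (Λ x₀)`: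
    (∀ t : ℝ, Ainv (Λinv (U t (Λ x₀)) - Λinv (U 0 (Λ x₀)))
        = ∫ s in (0:ℝ)..t, Λinv (U s (Λ x₀))) ∧
    -- uniqueness of the mild solution in `C(ℝ, V)`:
    (∀ (Y : ℝ → X) (hYmem : ∀ t : ℝ, Y t ∈ Λ.domain),
      Continuous (fun t : ℝ => Λ ⟨Y t, hYmem t⟩) →
      Y 0 = (x₀ : X) →
      (∀ t : ℝ, Ainv (Y t - Y 0) = ∫ s in (0:ℝ)..t, Y s) →
      ∀ t : ℝ, Y t = Λinv (U t (Λ x₀))) := by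
  classical
  -- consequences of selfadjointness
  have hH' : H.adjoint = H := LinearPMap.isSelfAdjoint_def.mp hH
  have hΛ' : Λ.adjoint = Λ := LinearPMap.isSelfAdjoint_def.mp hΛ
  have hHdense : Dense (H.domain : Set X) := hH.dense_domain
  have hΛdense : Dense (Λ.domain : Set X) := hΛ.dense_domain
  have hdomH : H.adjoint.domain = H.domain := congrArg LinearPMap.domain hH'
  have hdomΛ : Λ.adjoint.domain = Λ.domain := congrArg LinearPMap.domain hΛ'
  have hΛsymm : ∀ (a b : Λ.domain), ⟪Λ a, (b : X)⟫ = ⟪(a : X), Λ b⟫ := by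
    have h := LinearPMap.adjoint_isFormalAdjoint hΛdense
    intro a b
    have h2 := h ⟨(a : X), hdomΛ.symm ▸ a.2⟩ b
    rwa [pmapEqCongr hΛ' (hdomΛ.symm ▸ a.2) a.2] at h2
  -- the unitary group: algebraic facts
  have hUcomp : ∀ (s t : ℝ) (y : X), U s (U t y) = U (s + t) y := by
    intro s t y; rw [hUgrp]; rfl
  have hUtnu : ∀ (t : ℝ) (y : X), U t (U (-t) y) = y := by
    intro t y; rw [hUcomp, add_neg_cancel, hU0]; rfl
  have hUinner : ∀ (t : ℝ) (a b : X), ⟪U t a, U t b⟫ = ⟪a, b⟫ := by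
    intro t a b
    exact LinearIsometry.inner_map_map ⟨(U t : X →ₗ[ℂ] X), hUuni t⟩ a b
  have hUadj : ∀ (s : ℝ) (a b : X), ⟪U s a, b⟫ = ⟪a, U (-s) b⟫ := by
    intro s a b
    conv_lhs => rw [← hUtnu s b]
    rw [hUinner]
  -- the group commutes with its generator
  have hcomm : ∀ (v : H.domain) (t : ℝ) (h : U t (v : X) ∈ H.domain),
      H ⟨U t (v : X), h⟩ = U t (H v) := by
    intro v t h
    have h1 : HasDerivAt (fun s : ℝ => U s (v : X)) ((-Complex.I) • H ⟨U t (v : X), h⟩) t := by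
      obtain ⟨h', hd⟩ := hUgen v t
      exact hd
    have hbase : HasDerivAt (fun r : ℝ => U r (v : X)) ((-Complex.I) • H v) 0 := by
      obtain ⟨h0, hd0⟩ := hUgen v 0
      have he : H ⟨U 0 (v : X), h0⟩ = H v :=
        pmapCongr H (by rw [hU0]; rfl) h0 v.2
      rwa [he] at hd0
    have hshift : HasDerivAt (fun s : ℝ => U (s - t) (v : X)) ((-Complex.I) • H v) t := by
      have hs : HasDerivAt (fun s : ℝ => s - t) 1 t := (hasDerivAt_id t).sub_const t
      have := HasDerivAt.scomp_of_eq (hg := hbase) (hh := hs) (hy := by simp)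
      simpa [Function.comp_def] using this
    have h2 : HasDerivAt (fun s : ℝ => U s (v : X)) (U t ((-Complex.I) • H v)) t := by
      have hl : HasFDerivAt (fun z : X => U t z) ((U t).restrictScalars ℝ) (U (t - t) (v : X)) :=
        ((U t).restrictScalars ℝ).hasFDerivAt
      have hcd := hl.comp_hasDerivAt t hshift
      rw [show ((fun z : X => U t z) ∘ fun s : ℝ => U (s - t) (v : X))
          = fun s : ℝ => U t (U (s - t) (v : X)) from rfl] at hcd
      have heq : (fun s : ℝ => U t (U (s - t) (v : X))) = fun s : ℝ => U s (v : X) := by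
        funext s
        rw [hUcomp]
        congr 1
        ring
      rwa [heq] at hcd
    have h3 := h1.unique h2
    rw [map_smul] at h3
    exact smul_right_injective X (neg_ne_zero.mpr Complex.I_ne_zero) h3
  -- the integral of the orbit lies in the domain of the generator
  have hgen : ∀ (t : ℝ) (y : X), ∃ h : (∫ s in (0:ℝ)..t, U s y) ∈ H.domain,
      H ⟨∫ s in (0:ℝ)..t, U s y, h⟩ = Complex.I • (U t y - y) := by
    intro t y
    have hconty : Continuous fun s : ℝ => U s y := hUcont y
    have key : ∀ v : H.domain,
        ⟪Complex.I • (U t y - y), (v : X)⟫ = ⟪∫ s in (0:ℝ)..t, U s y, H v⟫ := by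
      intro v
      have hφ : ∀ s : ℝ, HasDerivAt (fun r : ℝ => Complex.I * ⟪U (-r) (v : X), y⟫)
          (⟪H v, U s y⟫) s := by
        intro s
        have hUv : HasDerivAt (fun r : ℝ => U r (v : X))
            ((-Complex.I) • (U (-s) (H v))) (-s) := by
          obtain ⟨hm, hd⟩ := hUgen v (-s)
          rwa [hcomm v (-s) hm] at hd
        have hneg : HasDerivAt (fun r : ℝ => U (-r) (v : X))
            (Complex.I • (U (-s) (H v))) s := by
          have hi : HasDerivAt (fun r : ℝ => -r) (-1 : ℝ) s := (hasDerivAt_id s).neg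
          have hh := HasDerivAt.scomp s hUv hi
          simpa [Function.comp_def] using hh
        have hin := HasDerivAt.inner ℂ hneg (hasDerivAt_const s y)
        have hmul := hin.const_mul Complex.I
        have hval : Complex.I * (⟪U (-s) (v : X), (0 : X)⟫
            + ⟪Complex.I • (U (-s) (H v)), y⟫) = ⟪H v, U s y⟫ := by
          have h1 : ⟪U (-s) (H v), y⟫ = ⟪H v, U s y⟫ := by
            rw [hUadj (-s) (H v) y, neg_neg]
          rw [inner_zero_right, inner_smul_left, h1, Complex.conj_I, zero_add,
            ← mul_assoc]
          have h2 : Complex.I * -Complex.I = 1 := by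
            rw [mul_neg, Complex.I_mul_I, neg_neg]
          rw [h2, one_mul]
        rwa [hval] at hmul
      have hcd : Continuous fun s : ℝ => ⟪H v, U s y⟫ := continuous_const.inner hconty
      have hFTC : ∫ s in (0:ℝ)..t, ⟪H v, U s y⟫
          = Complex.I * ⟪U (-t) (v : X), y⟫ - Complex.I * ⟪U (-0) (v : X), y⟫ :=
        intervalIntegral.integral_eq_sub_of_hasDerivAt (fun s _ => hφ s)
          (hcd.intervalIntegrable 0 t)
      have hIw : ⟪H v, ∫ s in (0:ℝ)..t, U s y⟫ = ∫ s in (0:ℝ)..t, ⟪H v, U s y⟫ :=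
        ((innerSL ℂ (H v)).intervalIntegral_comp_comm (hconty.intervalIntegrable 0 t)).symm
      have h2 : ⟪H v, ∫ s in (0:ℝ)..t, U s y⟫ = ⟪(v : X), Complex.I • (U t y - y)⟫ := by
        rw [hIw, hFTC, neg_zero, hU0]
        have h3 : ⟪U (-t) (v : X), y⟫ = ⟪(v : X), U t y⟫ := by
          rw [hUadj (-t) (v : X) y, neg_neg]
        rw [h3]
        simp [inner_smul_right, inner_sub_right, ContinuousLinearMap.id_apply]
        ring
      calc ⟪Complex.I • (U t y - y), (v : X)⟫
          = (starRingEnd ℂ) ⟪(v : X), Complex.I • (U t y - y)⟫ := (inner_conj_symm _ _).symm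
        _ = (starRingEnd ℂ) ⟪H v, ∫ s in (0:ℝ)..t, U s y⟫ := by rw [h2]
        _ = ⟪∫ s in (0:ℝ)..t, U s y, H v⟫ := inner_conj_symm _ _
    have hwmem : (∫ s in (0:ℝ)..t, U s y) ∈ H.adjoint.domain :=
      LinearPMap.mem_adjoint_domain_of_exists _ ⟨Complex.I • (U t y - y), key⟩
    have happ : H.adjoint ⟨∫ s in (0:ℝ)..t, U s y, hwmem⟩ = Complex.I • (U t y - y) :=
      LinearPMap.adjoint_apply_eq hHdense ⟨∫ s in (0:ℝ)..t, U s y, hwmem⟩ key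
    have hwH : (∫ s in (0:ℝ)..t, U s y) ∈ H.domain := hdomH ▸ hwmem
    refine ⟨hwH, ?_⟩
    rw [← pmapEqCongr hH' hwmem hwH]
    exact happ
  -- PART 1: the mild-solution identity
  have mild : ∀ t : ℝ, Ainv (Λinv (U t (Λ x₀)) - Λinv (U 0 (Λ x₀)))
      = ∫ s in (0:ℝ)..t, Λinv (U s (Λ x₀)) := by
    intro t
    obtain ⟨hwH, hHw⟩ := hgen t (Λ x₀)
    obtain ⟨hwΛ, hJΛw⟩ := (hHdom _).mp hwH
    have hval := hHval ⟨∫ s in (0:ℝ)..t, U s (Λ x₀), hwH⟩ hwΛ hJΛw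
    have hmain : Λ ⟨J (Λ ⟨∫ s in (0:ℝ)..t, U s (Λ x₀), hwΛ⟩), hJΛw⟩
        = U t (Λ x₀) - Λ x₀ :=
      smul_right_injective X Complex.I_ne_zero (hval.symm.trans hHw)
    have hRHS : ∫ s in (0:ℝ)..t, Λinv (U s (Λ x₀)) = Λinv (∫ s in (0:ℝ)..t, U s (Λ x₀)) :=
      Λinv.intervalIntegral_comp_comm ((hUcont (Λ x₀)).intervalIntegrable 0 t)
    have hLHS : Λinv (U t (Λ x₀)) - Λinv (U 0 (Λ x₀))
        = J (Λ ⟨∫ s in (0:ℝ)..t, U s (Λ x₀), hwΛ⟩) := by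
      rw [hU0, ContinuousLinearMap.id_apply, ← map_sub, ← hmain, hΛinv2 ⟨_, hJΛw⟩]
    obtain ⟨hxw, hΛxw⟩ := hΛinv1 (∫ s in (0:ℝ)..t, U s (Λ x₀))
    have hmem2 : Λ ⟨Λinv (∫ s in (0:ℝ)..t, U s (Λ x₀)), hxw⟩ ∈ Λ.domain := by
      rw [hΛxw]; exact hwΛ
    have hBmem : Λinv (∫ s in (0:ℝ)..t, U s (Λ x₀)) ∈ B.domain :=
      (hdom _).mpr ⟨hxw, hmem2⟩
    have hBval : B ⟨Λinv (∫ s in (0:ℝ)..t, U s (Λ x₀)), hBmem⟩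
        = Λ ⟨∫ s in (0:ℝ)..t, U s (Λ x₀), hwΛ⟩ := by
      rw [← hsq ⟨_, hxw⟩ hmem2 hBmem]
      exact pmapCongr Λ hΛxw hmem2 hwΛ
    have hfin := hAinv2 ⟨Λinv (∫ s in (0:ℝ)..t, U s (Λ x₀)), hBmem⟩
    rw [hBval] at hfin
    rw [hLHS, hRHS, hfin]
  refine ⟨mild, ?_⟩
  -- J ∘ J = -1 pointwise
  have hJJ : ∀ z : X, J (J z) = -z := by
    intro z
    have hc := congrFun (congrArg DFunLike.coe hJ2) z
    simpa using hc
  -- J adjoint pointwise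
  have hJadj : ∀ a c : X, ⟪J a, c⟫ = ⟪a, -(J c)⟫ := by
    intro a c
    have := ContinuousLinearMap.adjoint_inner_right J a c
    rw [hJ] at this
    simpa using this.symm
  -- PART 2 core: a mild solution with zero initial datum vanishes
  have hzero : ∀ (D : ℝ → X) (hmem : ∀ s, D s ∈ Λ.domain),
      Continuous (fun s => Λ ⟨D s, hmem s⟩) → D 0 = 0 →
      (∀ s, Ainv (D s) = ∫ r in (0:ℝ)..s, D r) → ∀ s, D s = 0 := by
    intro D hmem hcontΛ hD0 hmildD s₁
    have hDc : Continuous D := by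
      have hDe : D = fun s => Λinv (Λ ⟨D s, hmem s⟩) := by
        funext s; rw [hΛinv2]
      rw [hDe]; exact Λinv.continuous.comp hcontΛ
    have hWder : ∀ s : ℝ, HasDerivAt (fun r : ℝ => ∫ u in (0:ℝ)..r, D u) (D s) s :=
      fun s => (hDc.integral_hasStrictDerivAt 0 s).hasDerivAt
    have hqmem : ∀ s : ℝ, Λinv (-(J (D s))) ∈ Λ.domain := fun s => (hΛinv1 _).choose
    have hqval : ∀ (s : ℝ) (h : Λinv (-(J (D s))) ∈ Λ.domain),
        Λ ⟨Λinv (-(J (D s))), h⟩ = -(J (D s)) := fun s h => (hΛinv1 _).choose_spec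
    have hqc : Continuous fun s : ℝ => Λinv (-(J (D s))) :=
      Λinv.continuous.comp ((J.continuous.comp hDc).neg)
    have hWB : ∀ s : ℝ, ∃ hWB : (∫ u in (0:ℝ)..s, D u) ∈ B.domain,
        J (B ⟨∫ u in (0:ℝ)..s, D u, hWB⟩) = D s := by
      intro s
      have h := hAinv1 (D s)
      rwa [hmildD s] at h
    have hWmemΛ : ∀ s : ℝ, (∫ u in (0:ℝ)..s, D u) ∈ Λ.domain := fun s =>
      ((hdom _).mp (hWB s).choose).choose
    have hΛWq : ∀ (s : ℝ) (h : (∫ u in (0:ℝ)..s, D u) ∈ Λ.domain),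
        Λ ⟨∫ u in (0:ℝ)..s, D u, h⟩ = Λinv (-(J (D s))) := by
      intro s h
      obtain ⟨hBm, hJB⟩ := hWB s
      obtain ⟨hx, h2⟩ := (hdom _).mp hBm
      have hBval : B ⟨∫ u in (0:ℝ)..s, D u, hBm⟩ = -(J (D s)) := by
        have hc := congrArg J hJB
        rw [hJJ] at hc
        rw [neg_eq_iff_eq_neg] at hc
        rw [hc]
      have e1 : Λ ⟨Λ ⟨∫ u in (0:ℝ)..s, D u, hx⟩, h2⟩ = -(J (D s)) :=
        (hsq ⟨_, hx⟩ h2 hBm).trans hBval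
      have e2 : Λ ⟨∫ u in (0:ℝ)..s, D u, hx⟩ = Λinv (-(J (D s))) := by
        rw [← e1, hΛinv2 ⟨_, h2⟩]
      exact (pmapCongr Λ rfl h hx).trans e2
    -- the key scalar function is constant
    have hkey : ∀ v : H.domain, ⟪(v : X), Λinv (-(J (D s₁)))⟫ = 0 := by
      intro v
      have humem : ∀ s : ℝ, U (s - s₁) (v : X) ∈ H.domain :=
        fun s => (hUgen v (s - s₁)).choose
      have humemΛ : ∀ s : ℝ, U (s - s₁) (v : X) ∈ Λ.domain :=
        fun s => ((hHdom _).mp (humem s)).choose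
      have huder : ∀ s : ℝ, HasDerivAt (fun r : ℝ => U (r - s₁) (v : X))
          ((-Complex.I) • U (s - s₁) (H v)) s := by
        intro s
        have h0 := (hUgen v (s - s₁)).choose_spec
        rw [hcomm v (s - s₁) (hUgen v (s - s₁)).choose] at h0
        have hi : HasDerivAt (fun r : ℝ => r - s₁) 1 s := (hasDerivAt_id s).sub_const s₁
        have hh := HasDerivAt.scomp s h0 hi
        simpa [Function.comp_def] using hh
      have hgderiv : ∀ s : ℝ, HasDerivAt
          (fun r : ℝ => ⟪U (r - s₁) (v : X), Λinv (-(J (D r)))⟫) (0 : ℂ) s := by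
        intro s
        rw [hasDerivAt_iff_tendsto_slope]
        -- bridge identity
        have hbridge : ∀ x : ℝ, ⟪U (s - s₁) (v : X), Λinv (-(J (D x)))⟫
            = ⟪Λ ⟨U (s - s₁) (v : X), humemΛ s⟩, ∫ u in (0:ℝ)..x, D u⟫ := by
          intro x
          rw [← hΛWq x (hWmemΛ x)]
          exact (hΛsymm ⟨U (s - s₁) (v : X), humemΛ s⟩ ⟨_, hWmemΛ x⟩).symm
        have hslope : ∀ x : ℝ,
            slope (fun r : ℝ => ⟪U (r - s₁) (v : X), Λinv (-(J (D r)))⟫) s x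
            = ⟪slope (fun r : ℝ => U (r - s₁) (v : X)) s x, Λinv (-(J (D x)))⟫
              + ⟪Λ ⟨U (s - s₁) (v : X), humemΛ s⟩,
                  slope (fun r : ℝ => ∫ u in (0:ℝ)..r, D u) s x⟫ := by
          intro x
          rw [slope_def_module, slope_def_module, slope_def_module]
          rw [RCLike.real_smul_eq_coe_smul (K := ℂ) ((x - s)⁻¹),
            RCLike.real_smul_eq_coe_smul (K := ℂ) ((x - s)⁻¹),
            RCLike.real_smul_eq_coe_smul (K := ℂ) ((x - s)⁻¹)]
          rw [inner_smul_left, inner_smul_right, smul_eq_mul, RCLike.conj_ofReal]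
          rw [inner_sub_left, inner_sub_right]
          rw [hbridge x, hbridge s]
          ring
        have h1 : Filter.Tendsto (fun x : ℝ =>
            ⟪slope (fun r : ℝ => U (r - s₁) (v : X)) s x, Λinv (-(J (D x)))⟫)
            (nhdsWithin s {s}ᶜ)
            (nhds ⟪(-Complex.I) • U (s - s₁) (H v), Λinv (-(J (D s)))⟫) :=
          Filter.Tendsto.inner (hasDerivAt_iff_tendsto_slope.mp (huder s))
            ((hqc.tendsto s).mono_left nhdsWithin_le_nhds)
        have h2 : Filter.Tendsto (fun x : ℝ =>
            ⟪Λ ⟨U (s - s₁) (v : X), humemΛ s⟩,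
              slope (fun r : ℝ => ∫ u in (0:ℝ)..r, D u) s x⟫)
            (nhdsWithin s {s}ᶜ)
            (nhds ⟪Λ ⟨U (s - s₁) (v : X), humemΛ s⟩, D s⟫) :=
          Filter.Tendsto.inner tendsto_const_nhds
            (hasDerivAt_iff_tendsto_slope.mp (hWder s))
        have hsum := h1.add h2
        have hlim : ⟪(-Complex.I) • U (s - s₁) (H v), Λinv (-(J (D s)))⟫
            + ⟪Λ ⟨U (s - s₁) (v : X), humemΛ s⟩, D s⟫ = 0 := by
          obtain ⟨hx, hJx⟩ := (hHdom _).mp (humem s)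
          have hcval : U (s - s₁) (H v) = Complex.I • Λ ⟨J (Λ ⟨U (s - s₁) (v : X), hx⟩), hJx⟩ := by
            rw [← hcomm v (s - s₁) (humem s)]
            exact hHval ⟨U (s - s₁) (v : X), humem s⟩ hx hJx
          rw [hcval, smul_smul]
          have hii : (-Complex.I) * Complex.I = 1 := by
            simp [Complex.I_mul_I]
          rw [hii, one_smul]
          -- now: ⟪Λ (JΛu), q s⟫ + ⟪Λ u, D s⟫ = 0
          have e3 : ⟪Λ ⟨J (Λ ⟨U (s - s₁) (v : X), hx⟩), hJx⟩, Λinv (-(J (D s)))⟫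
              = ⟪J (Λ ⟨U (s - s₁) (v : X), hx⟩), -(J (D s))⟫ := by
            rw [hΛsymm ⟨_, hJx⟩ ⟨_, hqmem s⟩, hqval s (hqmem s)]
          rw [e3, hJadj, show J (-(J (D s))) = -(J (J (D s))) from map_neg J _,
            neg_neg, hJJ, inner_neg_right, pmapCongr Λ rfl hx (humemΛ s),
            neg_add_cancel]
        rw [show (0 : ℂ) = ⟪(-Complex.I) • U (s - s₁) (H v), Λinv (-(J (D s)))⟫
            + ⟪Λ ⟨U (s - s₁) (v : X), humemΛ s⟩, D s⟫ from hlim.symm]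
        exact hsum.congr (fun x => (hslope x).symm)
      -- g is constant
      have hgdiff : Differentiable ℝ
          (fun r : ℝ => ⟪U (r - s₁) (v : X), Λinv (-(J (D r)))⟫) :=
        fun s => (hgderiv s).differentiableAt
      have hconst := is_const_of_deriv_eq_zero hgdiff
        (fun s => (hgderiv s).deriv) s₁ 0
      have hg0 : ⟪U ((0:ℝ) - s₁) (v : X), Λinv (-(J (D 0)))⟫ = 0 := by
        rw [hD0]
        simp
      have hgs : ⟪U (s₁ - s₁) (v : X), Λinv (-(J (D s₁)))⟫ = 0 := hconst.trans hg0
      rwa [sub_self, hU0, ContinuousLinearMap.id_apply] at hgs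
    -- conclude
    have hq0 : Λinv (-(J (D s₁))) = 0 := hHdense.eq_zero_of_inner_right ℂ (fun v hv => hkey ⟨v, hv⟩)
    have hΛ0 : -(J (D s₁)) = 0 := by
      have := hqval s₁ (hqmem s₁)
      rw [show (⟨Λinv (-(J (D s₁))), hqmem s₁⟩ : Λ.domain) = 0 from
        Subtype.ext (by simpa using hq0)] at this
      rw [← this, LinearPMap.map_zero]
    have : J (J (D s₁)) = 0 := by
      rw [show J (D s₁) = 0 from by simpa using hΛ0, map_zero]
    rw [hJJ] at this
    simpa using this
  -- PART 2: uniqueness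
  intro Y hYmem hYcont hY0 hYmild t₁
  have hX0 : Λinv (U 0 (Λ x₀)) = (x₀ : X) := by
    rw [hU0, ContinuousLinearMap.id_apply, hΛinv2 x₀]
  have hXmem : ∀ s : ℝ, Λinv (U s (Λ x₀)) ∈ Λ.domain := fun s => (hΛinv1 _).choose
  have hXval : ∀ (s : ℝ) (h : Λinv (U s (Λ x₀)) ∈ Λ.domain),
      Λ ⟨Λinv (U s (Λ x₀)), h⟩ = U s (Λ x₀) := fun s h => (hΛinv1 _).choose_spec
  have hYc : Continuous Y := by
    have hYe : Y = fun s => Λinv (Λ ⟨Y s, hYmem s⟩) := by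
      funext s; rw [hΛinv2]
    rw [hYe]; exact Λinv.continuous.comp hYcont
  have hXc : Continuous fun s : ℝ => Λinv (U s (Λ x₀)) :=
    Λinv.continuous.comp (hUcont (Λ x₀))
  have hDmem : ∀ s : ℝ, Y s - Λinv (U s (Λ x₀)) ∈ Λ.domain :=
    fun s => sub_mem (hYmem s) (hXmem s)
  have hDcontΛ : Continuous fun s : ℝ => Λ ⟨Y s - Λinv (U s (Λ x₀)), hDmem s⟩ := by
    have he : ∀ s : ℝ, Λ ⟨Y s - Λinv (U s (Λ x₀)), hDmem s⟩
        = Λ ⟨Y s, hYmem s⟩ - U s (Λ x₀) := by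
      intro s
      have : (⟨Y s - Λinv (U s (Λ x₀)), hDmem s⟩ : Λ.domain)
          = ⟨Y s, hYmem s⟩ - ⟨Λinv (U s (Λ x₀)), hXmem s⟩ := rfl
      rw [this, LinearPMap.map_sub, hXval s (hXmem s)]
    simp only [he]
    exact hYcont.sub (hUcont (Λ x₀))
  have hD0 : Y 0 - Λinv (U 0 (Λ x₀)) = 0 := by
    rw [hY0, hX0, sub_self]
  have hDmild : ∀ s : ℝ, Ainv (Y s - Λinv (U s (Λ x₀)))
      = ∫ r in (0:ℝ)..s, (Y r - Λinv (U r (Λ x₀))) := by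
    intro s
    have hYint : IntervalIntegrable Y MeasureTheory.volume 0 s :=
      hYc.intervalIntegrable 0 s
    have hXint : IntervalIntegrable (fun r : ℝ => Λinv (U r (Λ x₀)))
        MeasureTheory.volume 0 s := hXc.intervalIntegrable 0 s
    have hsplit : Y s - Λinv (U s (Λ x₀))
        = (Y s - Y 0) - (Λinv (U s (Λ x₀)) - Λinv (U 0 (Λ x₀))) := by
      rw [hY0, hX0]; abel
    rw [hsplit, map_sub, hYmild s, mild s, intervalIntegral.integral_sub hYint hXint]
  have hfinal := hzero (fun s => Y s - Λinv (U s (Λ x₀))) hDmem hDcontΛ hD0 hDmild t₁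
  have := sub_eq_zero.mp hfinal
  exact this
end
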